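/- For a bounded linear operator T on a complex Hilbert space, (1/4)‖T*T + TT*‖ ≤ w(T)² ≤ (1/2)‖T*T + TT*‖. -/

import Mathlib

/-!
Write `T = A + i B` with `A = ℜ T`, `B = ℑ T` self-adjoint, so that `T*T + TT* = 2 (A² + B²)`.
Since `Re ⟪A x, x⟫ = Re ⟪T x, x⟫` and `ℑ T = -ℜ (i T)`, and the norm of a self-adjoint operator is
the supremum of its Rayleigh quotient, `‖A‖, ‖B‖ ≤ w(T)`; this gives the lower bound.
For the upper bound, for unit vectors `x`,
`|⟪T x, x⟫|² ≤ ‖T x‖ ‖T* x‖ ≤ (‖T x‖² + ‖T* x‖²) / 2 = Re ⟪(T*T + TT*) x, x⟫ / 2`.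
-/

open scoped NNReal ENNReal
open ContinuousLinearMap

set_option synthInstance.maxHeartbeats 1000000
set_option maxHeartbeats 1000000


variable {H : Type*} [NormedAddCommGroup H] [InnerProductSpace ℂ H] [CompleteSpace H]

/-- The numerical radius of a bounded linear operator. -/
noncomputable def numRadius (T : H →L[ℂ] H) : ℝ :=
  ⨆ x : {x : H // ‖x‖ = 1}, ‖(inner ℂ (T x) x : ℂ)‖

/-- The modulus `|T| = (T*T)^{1/2}`. -/
noncomputable def opAbs (T : H →L[ℂ] H) : H →L[ℂ] H :=
  CFC.sqrt (adjoint T * T)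

/-- The `t`-Aluthge transform `|T|^t U |T|^{1-t}` (with `|T|^0` the support
projection, i.e. `U*U` for the polar partial isometry `U`). -/
noncomputable def aluthge (T U : H →L[ℂ] H) (t : ℝ≥0) : H →L[ℂ] H :=
  CFC.nnrpow (opAbs T) t * U * CFC.nnrpow (opAbs T) (1 - t)

open ComplexStarModule RCLike

section NumRadius

variable {E : Type*} [NormedAddCommGroup E] [InnerProductSpace ℂ E] (T : E →L[ℂ] E)

theorem norm_inner_apply_self_le_opNorm {x : E} (hx : ‖x‖ = 1) : ‖inner ℂ (T x) x‖ ≤ ‖T‖ := by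
  simpa [hx] using (norm_inner_le_norm (T x) x).trans
    (mul_le_mul_of_nonneg_right (T.le_opNorm x) (norm_nonneg x))

theorem bddAbove_range_norm_inner_apply_self :
    BddAbove (Set.range fun x : {x : E // ‖x‖ = 1} => ‖inner ℂ (T x) (x : E)‖) :=
  ⟨‖T‖, fun _ ⟨x, hx⟩ => hx ▸ norm_inner_apply_self_le_opNorm T x.2⟩

theorem numRadius_nonneg : 0 ≤ numRadius T :=
  Real.iSup_nonneg fun _ => norm_nonneg _

theorem norm_inner_le_numRadius {x : E} (hx : ‖x‖ = 1) : ‖inner ℂ (T x) x‖ ≤ numRadius T :=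
  le_ciSup (bddAbove_range_norm_inner_apply_self T) (⟨x, hx⟩ : {x : E // ‖x‖ = 1})

theorem norm_inner_le_numRadius_mul_sq (x : E) :
    ‖inner ℂ (T x) x‖ ≤ numRadius T * ‖x‖ ^ 2 := by
  rcases eq_or_ne x 0 with rfl | hx
  · simp
  have hx' : 0 < ‖x‖ := norm_pos_iff.mpr hx
  have hu : ‖(‖x‖⁻¹ : ℂ) • x‖ = 1 := by simp [norm_smul, hx'.ne']
  have := norm_inner_le_numRadius T hu
  simp only [map_smul, inner_smul_left, inner_smul_right, norm_mul, norm_conj, norm_inv,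
    Complex.norm_real, norm_norm] at this
  rwa [← div_le_iff₀ (by positivity), div_eq_inv_mul, sq, mul_inv, mul_assoc]

theorem numRadius_le {M : ℝ} (hM : 0 ≤ M) (h : ∀ x : E, ‖x‖ = 1 → ‖inner ℂ (T x) x‖ ≤ M) :
    numRadius T ≤ M :=
  Real.iSup_le (fun x => h x x.2) hM

theorem numRadius_smul (c : ℂ) : numRadius (c • T) = ‖c‖ * numRadius T := by
  simp only [numRadius, smul_apply, inner_smul_left, norm_mul, norm_conj]
  exact (Real.mul_iSup_of_nonneg (norm_nonneg c) _).symm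

end NumRadius

theorem re_inner_realPart_apply (T : H →L[ℂ] H) (x : H) :
    re (inner ℂ ((ℜ T : H →L[ℂ] H) x) x) = re (inner ℂ (T x) x) := by
  rw [realPart_apply_coe, star_eq_adjoint, smul_apply, add_apply, real_smul_eq_coe_smul (K := ℂ),
    inner_smul_real_left, inner_add_left, adjoint_inner_left, ← inner_conj_symm x (T x)]
  simp only [real_smul_eq_coe_mul, re_ofReal_mul, map_add, conj_re]
  ring

theorem norm_realPart_le_numRadius (T : H →L[ℂ] H) : ‖(ℜ T : H →L[ℂ] H)‖ ≤ numRadius T := by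
  rw [(ℜ T : H →L[ℂ] H).norm_eq_iSup_rayleighQuotient (ℜ T).2.isSymmetric]
  refine ciSup_le fun x => ?_
  rw [rayleighQuotient, reApplyInnerSelf_apply, re_inner_realPart_apply, abs_div, abs_sq]
  exact div_le_of_le_mul₀ (sq_nonneg _) (numRadius_nonneg T)
    ((abs_re_le_norm _).trans (norm_inner_le_numRadius_mul_sq T x))

theorem norm_imaginaryPart_le_numRadius (T : H →L[ℂ] H) :
    ‖(ℑ T : H →L[ℂ] H)‖ ≤ numRadius T := by
  have := norm_realPart_le_numRadius (Complex.I • T)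
  rwa [realPart_I_smul, numRadius_smul, Complex.norm_I, one_mul, NegMemClass.coe_neg,
    norm_neg] at this

theorem norm_adjoint_mul_self_add_self_mul_adjoint_le (T : H →L[ℂ] H) :
    ‖adjoint T * T + T * adjoint T‖ ≤ 4 * numRadius T ^ 2 := by
  have hA := norm_realPart_le_numRadius T
  have hB := norm_imaginaryPart_le_numRadius T
  rw [← star_eq_adjoint, star_mul_self_add_self_mul_star]
  set A : H →L[ℂ] H := (ℜ T : H →L[ℂ] H)
  set B : H →L[ℂ] H := (ℑ T : H →L[ℂ] H)
  calc ‖2 • (A * A + B * B)‖ ≤ 2 * (‖A‖ * ‖A‖ + ‖B‖ * ‖B‖) := by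
        refine norm_nsmul_le.trans ?_
        push_cast
        gcongr
        exact (norm_add_le _ _).trans (add_le_add (norm_mul_le _ _) (norm_mul_le _ _))
    _ ≤ 2 * (numRadius T * numRadius T + numRadius T * numRadius T) := by
        gcongr <;> exact numRadius_nonneg T
    _ = 4 * numRadius T ^ 2 := by ring

theorem norm_inner_apply_self_sq_le (T : H →L[ℂ] H) {x : H} (hx : ‖x‖ = 1) :
    ‖inner ℂ (T x) x‖ ^ 2 ≤ ‖adjoint T * T + T * adjoint T‖ / 2 := by
  have hT : ‖inner ℂ (T x) x‖ ≤ ‖T x‖ := by simpa [hx] using norm_inner_le_norm (T x) x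
  have hT' : ‖inner ℂ (T x) x‖ ≤ ‖adjoint T x‖ := by
    simpa [hx, adjoint_inner_right] using norm_inner_le_norm (𝕜 := ℂ) x (adjoint T x)
  have hsum : ‖T x‖ ^ 2 + ‖adjoint T x‖ ^ 2 ≤ ‖adjoint T * T + T * adjoint T‖ := by
    rw [apply_norm_sq_eq_inner_adjoint_left, apply_norm_sq_eq_inner_adjoint_left,
      adjoint_adjoint, ← map_add, ← inner_add_left]
    exact (re_le_norm _).trans
      (norm_inner_apply_self_le_opNorm (adjoint T * T + T * adjoint T) hx)
  nlinarith [mul_le_mul hT hT' (norm_nonneg _) (norm_nonneg _), sq_nonneg (‖T x‖ - ‖adjoint T x‖)]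

theorem numRadius_sq_le_half_norm (T : H →L[ℂ] H) :
    numRadius T ^ 2 ≤ ‖adjoint T * T + T * adjoint T‖ / 2 :=
  (Real.le_sqrt (numRadius_nonneg T) (by positivity)).1 <| numRadius_le T (Real.sqrt_nonneg _)
    fun _ hx => Real.le_sqrt_of_sq_le (norm_inner_apply_self_sq_le T hx)

/-- Kittaneh's inequality: (1/4)‖T*T+TT*‖ ≤ w(T)² ≤ (1/2)‖T*T+TT*‖. -/
theorem kittaneh_numRadius_sq_bounds (T : H →L[ℂ] H) :
    (1 / 4) * ‖adjoint T * T + T * adjoint T‖ ≤ numRadius T ^ 2 ∧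
      numRadius T ^ 2 ≤ (1 / 2) * ‖adjoint T * T + T * adjoint T‖ :=
  ⟨by linarith [norm_adjoint_mul_self_add_self_mul_adjoint_le T],
    by linarith [numRadius_sq_le_half_norm T]⟩
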